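/- (Regret of the base algorithm.) Let ε > 0, α > 1/2, let (h_t)_{t≥1} be a positive nondecreasing real sequence, and set k_t = 2·h_t and z_t = ((12α + 4)/(2α − 1))·h_t². Let (l̃_t)_{t≥1} be a real sequence such that |l̃_t| ≤ h_t and ∑_{i=1}^t l̃_i ≤ h_t for all t ≥ 1. Define Ṽ_t = ∑_{i=1}^t l̃_i², S̃_t = −∑_{i=1}^t l̃_i (with Ṽ_0 = S̃_0 = 0), and ỹ_t = D_t(Ṽ_{t−1}, S̃_{t−1}) where D_t(V, S) = ε·erfi(S/√(4·α·(V + z_t + k_t·S))) − (ε·k_t·√α/(2·√(V + z_t + k_t·S)))·exp(S²/(4·α·(V + z_t + k_t·S))). Then for every T ≥ 1 and every ũ ≥ 0: ∑_{t=1}^T l̃_t·(ỹ_t − ũ) ≤ ε·√(α·(Ṽ_T + z_T + k_T·S̄)) + ũ·S̄, where S̄ = 4·α·k_T·(1 + √(log(2·ũ/ε + 1)))² + √(4·α·(Ṽ_T + z_T))·(1 + √(log(2·ũ/ε + 1))). -/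

import Mathlib

/-!
`Φ_t(V, S) = φ(V + z_t + k_t S, S)` is a potential for the base algorithm. In a round with loss
`c`, the map `c ↦ φ(A + k_t (S - c) + c², S - c)` is concave on `[-h_t, h_t]` (this is where the
constant in `z_t` comes from) and has derivative `-D_t` at `0`, so the round lowers `Φ_t` by at
least `l̃_t ỹ_t`. Passing from `h_t` to `h_{t+1}` only enlarges the first argument of `φ`, in
which `φ` decreases. Telescoping from `Φ_1(0, 0) ≤ 0` gives `∑ l̃_t ỹ_t ≤ -Φ_T(Ṽ_T, S̃_T)`.
Finally `S ↦ ũ S - Φ_T(Ṽ_T, S)` decreases beyond `S̄`: there the argument `θ = S / √(4αx)` of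
`erfi` exceeds `1 + √(log (2ũ/ε + 1))`, and `erfi θ ≥ (exp θ² - 1) / (2θ)` makes `ũ - ∂_S Φ_T`
negative.
-/

/-- The imaginary error function, `erfi x = ∫ u in 0..x, exp (u²)`
(the conventional erfi scaled by `√π / 2`). -/
noncomputable def erfi (x : ℝ) : ℝ := ∫ u in (0:ℝ)..x, Real.exp (u ^ 2)

/-- `D(V, S)`, the partial derivative in `S` of the shifted potential
`Φ(V, S) = φ(V + z + k·S, S)`. -/
noncomputable def Dfun (ε α k z V S : ℝ) : ℝ :=
  ε * erfi (S / Real.sqrt (4 * α * (V + z + k * S))) -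
    ε * k * Real.sqrt α / (2 * Real.sqrt (V + z + k * S)) *
      Real.exp (S ^ 2 / (4 * α * (V + z + k * S)))

open Real Set

noncomputable def erfiIntegral (x : ℝ) : ℝ := ∫ u in (0:ℝ)..x, erfi u

lemma hasDerivAt_erfi (x : ℝ) : HasDerivAt erfi (exp (x ^ 2)) x :=
  ((by fun_prop : Continuous fun u : ℝ => exp (u ^ 2)).integral_hasStrictDerivAt 0 x).hasDerivAt

lemma continuous_erfi : Continuous erfi :=
  continuous_iff_continuousAt.2 fun x => (hasDerivAt_erfi x).continuousAt

lemma hasDerivAt_erfiIntegral (x : ℝ) : HasDerivAt erfiIntegral (erfi x) x :=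
  (continuous_erfi.integral_hasStrictDerivAt 0 x).hasDerivAt

lemma erfi_zero : erfi 0 = 0 := intervalIntegral.integral_same

lemma monotone_erfi : Monotone erfi :=
  monotone_of_hasDerivAt_nonneg hasDerivAt_erfi fun _ => (exp_pos _).le

lemma erfiIntegral_nonneg (x : ℝ) : 0 ≤ erfiIntegral x := by
  rcases le_total 0 x with hx | hx
  · exact intervalIntegral.integral_nonneg hx fun u hu => erfi_zero ▸ monotone_erfi hu.1
  · rw [erfiIntegral, intervalIntegral.integral_symm, ← intervalIntegral.integral_neg]
    exact intervalIntegral.integral_nonneg hx fun u hu =>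
      neg_nonneg.2 (erfi_zero ▸ monotone_erfi hu.2)

lemma two_mul_erfiIntegral (θ : ℝ) : 2 * erfiIntegral θ = 2 * θ * erfi θ - exp (θ ^ 2) + 1 := by
  have hderiv (u : ℝ) : HasDerivAt (fun u => u * erfi u - exp (u ^ 2) / 2) (erfi u) u := by
    refine (((hasDerivAt_id' u).mul (hasDerivAt_erfi u)).sub
      (((hasDerivAt_pow 2 u).exp).div_const 2)).congr_deriv ?_
    push_cast
    ring
  rw [erfiIntegral, intervalIntegral.integral_eq_sub_of_hasDerivAt (fun u _ => hderiv u)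
    (continuous_erfi.intervalIntegrable _ _)]
  simp [erfi_zero]
  ring

lemma exp_sq_le_two_mul_erfi_add_one (θ : ℝ) : exp (θ ^ 2) ≤ 2 * θ * erfi θ + 1 := by
  linarith [two_mul_erfiIntegral θ, erfiIntegral_nonneg θ]

lemma exp_sq_le_erfi_add_one {b : ℝ} (hb : 0 ≤ b) : exp (b ^ 2) ≤ erfi (b + 1) := by
  obtain ⟨ξ, hξ, hslope⟩ := exists_hasDerivAt_eq_slope erfi (fun u => exp (u ^ 2))
    (lt_add_one b) continuous_erfi.continuousOn fun u _ => hasDerivAt_erfi u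
  have hexp : exp (b ^ 2) ≤ exp (ξ ^ 2) := exp_le_exp.2 (by nlinarith [hξ.1])
  have hb0 : 0 ≤ erfi b := erfi_zero ▸ monotone_erfi hb
  rw [add_sub_cancel_left, div_one] at hslope
  linarith

noncomputable def potentialArg (α x y : ℝ) : ℝ := y / (2 * √(α * x))

/-- The paper's `φ(x, y)`, with `√(4αx)` written as `2√(αx)`. -/
noncomputable def potential (ε α x y : ℝ) : ℝ :=
  ε * √(α * x) * (2 * erfiIntegral (potentialArg α x y) - 1)

noncomputable def potentialDerivX (ε α x y : ℝ) : ℝ :=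
  -(ε * α * exp (potentialArg α x y ^ 2) / (2 * √(α * x)))

noncomputable def potentialDerivY (ε α x y : ℝ) : ℝ := ε * erfi (potentialArg α x y)

section Paths

variable {X Y : ℝ → ℝ} {X' Y' θ' c : ℝ} {ε α : ℝ}

lemma hasDerivAt_potentialArg_comp (hα : 0 < α) (hX : HasDerivAt X X' c) (hXc : 0 < X c)
    (hY : HasDerivAt Y Y' c) :
    HasDerivAt (fun t => potentialArg α (X t) (Y t))
      ((Y' - X' * Y c / (2 * X c)) / (2 * √(α * X c))) c := by
  have hr : 0 < √(α * X c) := sqrt_pos.2 (mul_pos hα hXc)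
  have hr2 : √(α * X c) ^ 2 = α * X c := sq_sqrt (mul_pos hα hXc).le
  refine (hY.div (((hX.const_mul α).sqrt (mul_pos hα hXc).ne').const_mul 2)
    (by positivity)).congr_deriv ?_
  field_simp
  rw [hr2]
  field_simp

lemma hasDerivAt_potential_comp (hα : 0 < α) (hX : HasDerivAt X X' c) (hXc : 0 < X c)
    (hY : HasDerivAt Y Y' c) :
    HasDerivAt (fun t => potential ε α (X t) (Y t))
      (X' * potentialDerivX ε α (X c) (Y c) + Y' * potentialDerivY ε α (X c) (Y c)) c := by
  have hr : 0 < √(α * X c) := sqrt_pos.2 (mul_pos hα hXc)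
  have hr2 : √(α * X c) ^ 2 = α * X c := sq_sqrt (mul_pos hα hXc).le
  have hθ := hasDerivAt_potentialArg_comp hα hX hXc hY
  refine ((((hX.const_mul α).sqrt (mul_pos hα hXc).ne').const_mul ε).mul
    ((((hasDerivAt_erfiIntegral _).comp c hθ).const_mul 2).sub_const 1)).congr_deriv ?_
  simp only [potentialDerivX, potentialDerivY, Function.comp_apply]
  rw [two_mul_erfiIntegral]
  unfold potentialArg
  field_simp
  linear_combination -(ε * erfi (Y c / (2 * √(α * X c))) * X' * Y c) * hr2

lemma hasDerivAt_potentialDerivY_comp (hθ : HasDerivAt (fun t => potentialArg α (X t) (Y t)) θ' c) :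
    HasDerivAt (fun t => potentialDerivY ε α (X t) (Y t))
      (ε * exp (potentialArg α (X c) (Y c) ^ 2) * θ') c :=
  (((hasDerivAt_erfi _).comp c hθ).const_mul ε).congr_deriv (mul_assoc _ _ _).symm

lemma hasDerivAt_potentialDerivX_comp (hα : 0 < α) (hX : HasDerivAt X X' c) (hXc : 0 < X c)
    (hθ : HasDerivAt (fun t => potentialArg α (X t) (Y t)) θ' c) :
    HasDerivAt (fun t => potentialDerivX ε α (X t) (Y t))
      (-(ε * α * exp (potentialArg α (X c) (Y c) ^ 2) *
        (potentialArg α (X c) (Y c) * θ' - X' / (4 * X c)) / √(α * X c))) c := by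
  have hr : 0 < √(α * X c) := sqrt_pos.2 (mul_pos hα hXc)
  have hr2 : √(α * X c) ^ 2 = α * X c := sq_sqrt (mul_pos hα hXc).le
  refine (((((hθ.pow 2).exp).const_mul (ε * α)).div
    (((hX.const_mul α).sqrt (mul_pos hα hXc).ne').const_mul 2) (by positivity)).neg).congr_deriv ?_
  simp only [Pi.pow_apply]
  field_simp
  rw [hr2]
  field_simp
  ring

end Paths

lemma ConcaveOn.le_add_mul_sub_of_hasDerivAt {f : ℝ → ℝ} {s : Set ℝ} {x y f' : ℝ}
    (hf : ConcaveOn ℝ s f) (hx : x ∈ s) (hy : y ∈ s) (hf' : HasDerivAt f f' x) :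
    f y ≤ f x + f' * (y - x) := by
  rcases lt_trichotomy x y with hxy | rfl | hyx
  · have := hf.slope_le_of_hasDerivAt hx hy hxy hf'
    rw [slope_def_field, div_le_iff₀ (sub_pos.2 hxy)] at this
    linarith
  · simp
  · have := hf.le_slope_of_hasDerivAt hy hx hyx hf'
    rw [slope_def_field, le_div_iff₀ (sub_pos.2 hyx)] at this
    linarith

noncomputable def roundCurvature (α b x y : ℝ) : ℝ :=
  b ^ 2 * (α * x + y ^ 2 / 2) + 2 * b * x * y - (4 * α - 2) * x ^ 2

lemma sq_div_two_sub_mul_le {w x H : ℝ} (hw : -2 * H ≤ w) (hwx : w ≤ 2 * x) :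
    w ^ 2 / 2 - 2 * w * x ≤ 2 * H ^ 2 + 4 * H * x := by
  nlinarith [mul_nonneg (by linarith : 0 ≤ w + 2 * H) (by linarith : 0 ≤ 2 * x - w),
    sq_nonneg (w + 2 * H)]

lemma curvature_bound_of_variance_ge {α h z m b x : ℝ} (hα : 1 / 2 < α) (hh : 0 < h)
    (hz : (2 * α - 1) * z = (12 * α + 4) * h ^ 2) (hm0 : 0 ≤ m) (hm : m ≤ 2 * h) (hb0 : 0 ≤ b)
    (hb : b ≤ 4 * h - 2 * m) (hx : z - 2 * h * m ≤ x) :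
    α * b ^ 2 * x + 2 * h ^ 4 + 4 * h ^ 2 * x ≤ (4 * α - 2) * x ^ 2 := by
  have hQ : (8 * α + 4) * h ^ 2 ≤ (4 * α - 2) * x - α * (4 * h - 2 * m) ^ 2 - 4 * h ^ 2 := by
    nlinarith [mul_le_mul_of_nonneg_left hx (by linarith : (0:ℝ) ≤ 4 * α - 2),
      mul_le_mul_of_nonneg_left hm (mul_nonneg (by linarith : (0:ℝ) ≤ α) hm0), mul_nonneg hh.le hm0]
  have hx' : (4 * α + 8) * h ^ 2 ≤ (2 * α - 1) * x := by
    nlinarith [mul_le_mul_of_nonneg_left hx (by linarith : (0:ℝ) ≤ 2 * α - 1),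
      mul_le_mul_of_nonneg_left hm (mul_nonneg (by linarith : (0:ℝ) ≤ 2 * α - 1) hh.le)]
  have hxpos : 0 < x := by nlinarith [mul_pos hh hh]
  have hb2 : b ^ 2 ≤ (4 * h - 2 * m) ^ 2 := pow_le_pow_left₀ hb0 hb 2
  have h4 : 2 * h ^ 4 ≤ (8 * α + 4) * h ^ 2 * x := by
    nlinarith [mul_le_mul_of_nonneg_left hx' (by positivity : (0:ℝ) ≤ (4 * α + 2) * h ^ 2),
      pow_pos hh 4]
  nlinarith [mul_le_mul_of_nonneg_left hQ hxpos.le,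
    mul_le_mul_of_nonneg_right hb2 (by positivity : (0:ℝ) ≤ α * x)]

lemma roundCurvature_nonpos {α h z A s S : ℝ} (hα : 1 / 2 < α) (hh : 0 < h)
    (hz : (2 * α - 1) * z = (12 * α + 4) * h ^ 2) (hA : z ≤ A) (hs : |s| ≤ h) (hS : -h ≤ S) :
    roundCurvature α (2 * s - 2 * h) (A + 2 * h * (S - s) + s ^ 2) (S - s) ≤ 0 := by
  obtain ⟨hs₁, hs₂⟩ := abs_le.1 hs
  have hz6 : 6 * h ^ 2 ≤ z := by nlinarith [mul_pos hh hh]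
  set x := A + 2 * h * (S - s) + s ^ 2 with hx
  set y := S - s
  have hb : 0 ≤ 2 * h - 2 * s := by linarith
  have hquad : α * (2 * h - 2 * s) ^ 2 * x + 2 * h ^ 4 + 4 * h ^ 2 * x ≤ (4 * α - 2) * x ^ 2 := by
    rcases le_or_gt 0 y with hy0 | hy0
    · exact curvature_bound_of_variance_ge (m := 0) hα hh hz le_rfl (by linarith) hb (by linarith)
        (by nlinarith [sq_nonneg s, mul_nonneg hh.le hy0])
    · exact curvature_bound_of_variance_ge (m := -y) hα hh hz (by linarith) (by linarith) hb
        (by linarith) (by nlinarith [sq_nonneg s])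
  -- With `w = b y`, the curvature is `α b² x + (w² / 2 - 2 w x) - (4α - 2) x²`, and the middle
  -- term is convex in `w ∈ [-2h², 2x]`.
  have hw := sq_div_two_sub_mul_le (w := (2 * h - 2 * s) * y) (x := x) (H := h ^ 2)
    (by nlinarith [mul_le_mul_of_nonneg_left (by linarith : -h - s ≤ y) hb])
    (by
      rcases le_or_gt 0 y with hy0 | hy0
      · nlinarith [mul_le_mul_of_nonneg_right (by linarith : 2 * h - 2 * s ≤ 4 * h) hy0,
          sq_nonneg s]
      · nlinarith [mul_nonneg hb (neg_nonneg.2 hy0.le), sq_nonneg s,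
          mul_le_mul_of_nonneg_left (by linarith : -2 * h ≤ y) hh.le])
  unfold roundCurvature
  linear_combination hquad + hw

section Round

variable {ε α h k z A S : ℝ}

lemma hasDerivAt_round_variance (c : ℝ) :
    HasDerivAt (fun c => A + k * (S - c) + c ^ 2) (2 * c - k) c := by
  refine ((((hasDerivAt_id' c).const_sub S).const_mul k).const_add A |>.add
    (hasDerivAt_pow 2 c)).congr_deriv ?_
  push_cast
  ring

lemma hasDerivAt_potential_round (hα : 0 < α) {c : ℝ} (hX : 0 < A + k * (S - c) + c ^ 2) :
    HasDerivAt (fun c => potential ε α (A + k * (S - c) + c ^ 2) (S - c))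
      ((2 * c - k) * potentialDerivX ε α (A + k * (S - c) + c ^ 2) (S - c)
        - potentialDerivY ε α (A + k * (S - c) + c ^ 2) (S - c)) c :=
  (hasDerivAt_potential_comp hα (hasDerivAt_round_variance c) hX
    ((hasDerivAt_id' c).const_sub S)).congr_deriv (by ring)

lemma hasDerivAt_potentialDeriv_round (hα : 0 < α) {c : ℝ} (hX : 0 < A + k * (S - c) + c ^ 2) :
    HasDerivAt (fun c => (2 * c - k) * potentialDerivX ε α (A + k * (S - c) + c ^ 2) (S - c)
        - potentialDerivY ε α (A + k * (S - c) + c ^ 2) (S - c))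
      (ε * exp (potentialArg α (A + k * (S - c) + c ^ 2) (S - c) ^ 2) *
        roundCurvature α (2 * c - k) (A + k * (S - c) + c ^ 2) (S - c) /
          (4 * (A + k * (S - c) + c ^ 2) ^ 2 * √(α * (A + k * (S - c) + c ^ 2)))) c := by
  have hr : 0 < √(α * (A + k * (S - c) + c ^ 2)) := sqrt_pos.2 (mul_pos hα hX)
  have hr2 : √(α * (A + k * (S - c) + c ^ 2)) ^ 2 = α * (A + k * (S - c) + c ^ 2) :=
    sq_sqrt (mul_pos hα hX).le
  have hθ := hasDerivAt_potentialArg_comp hα (hasDerivAt_round_variance c) hX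
    ((hasDerivAt_id' c).const_sub S)
  refine ((((hasDerivAt_id' c).const_mul 2).sub_const k |>.mul
    (hasDerivAt_potentialDerivX_comp (ε := ε) hα (hasDerivAt_round_variance c) hX hθ)).sub
    (hasDerivAt_potentialDerivY_comp hθ)).congr_deriv ?_
  unfold potentialDerivX potentialArg roundCurvature
  generalize A + k * (S - c) + c ^ 2 = x at hX hr hr2 ⊢
  generalize √(α * x) = r at hr hr2 ⊢
  obtain rfl : α = r ^ 2 / x := by field_simp; linarith
  field_simp
  ring

lemma round_variance_pos (hα : 1 / 2 < α) (hh : 0 < h)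
    (hz : (2 * α - 1) * z = (12 * α + 4) * h ^ 2) (hA : z ≤ A) (hS : -h ≤ S) (c : ℝ) :
    0 < A + 2 * h * (S - c) + c ^ 2 := by
  have hz6 : 6 * h ^ 2 ≤ z := by nlinarith [mul_pos hh hh]
  nlinarith [sq_nonneg (c - h), mul_pos hh hh,
    mul_le_mul_of_nonneg_left hS (by linarith : 0 ≤ 2 * h)]

lemma concaveOn_potential_round (hε : 0 ≤ ε) (hα : 1 / 2 < α) (hh : 0 < h)
    (hz : (2 * α - 1) * z = (12 * α + 4) * h ^ 2) (hA : z ≤ A) (hS : -h ≤ S) :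
    ConcaveOn ℝ (Icc (-h) h) fun c => potential ε α (A + 2 * h * (S - c) + c ^ 2) (S - c) := by
  have hα0 : 0 < α := by linarith
  have hX := round_variance_pos hα hh hz hA hS
  refine concaveOn_of_hasDerivWithinAt2_nonpos (convex_Icc _ _)
    (fun c _ => (hasDerivAt_potential_round hα0 (hX c)).continuousAt.continuousWithinAt)
    (fun c _ => (hasDerivAt_potential_round hα0 (hX c)).hasDerivWithinAt)
    (fun c _ => (hasDerivAt_potentialDeriv_round hα0 (hX c)).hasDerivWithinAt) fun c hc => ?_
  rw [interior_Icc] at hc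
  have hcurv := roundCurvature_nonpos hα hh hz hA (abs_le.2 ⟨hc.1.le, hc.2.le⟩) hS
  exact div_nonpos_of_nonpos_of_nonneg (mul_nonpos_of_nonneg_of_nonpos (by positivity) hcurv)
    (by positivity)

lemma potential_round_le (hε : 0 ≤ ε) (hα : 1 / 2 < α) (hh : 0 < h)
    (hz : (2 * α - 1) * z = (12 * α + 4) * h ^ 2) (hA : z ≤ A) (hS : -h ≤ S) {c : ℝ}
    (hc : |c| ≤ h) :
    potential ε α (A + 2 * h * (S - c) + c ^ 2) (S - c) ≤
      potential ε α (A + 2 * h * S) S -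
        c * (potentialDerivY ε α (A + 2 * h * S) S +
          2 * h * potentialDerivX ε α (A + 2 * h * S) S) := by
  have htangent := (concaveOn_potential_round hε hα hh hz hA hS).le_add_mul_sub_of_hasDerivAt
    ⟨by linarith, hh.le⟩ (abs_le.1 hc) (hasDerivAt_potential_round (ε := ε) (by linarith)
      (round_variance_pos hα hh hz hA hS 0))
  simp only [sub_zero, ne_eq, OfNat.ofNat_ne_zero, not_false_eq_true, zero_pow, add_zero,
    mul_zero, zero_sub] at htangent
  linarith

end Round

lemma potentialDerivX_nonpos {ε α : ℝ} (hε : 0 ≤ ε) (hα : 0 ≤ α) (x y : ℝ) :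
    potentialDerivX ε α x y ≤ 0 :=
  neg_nonpos.2 (by positivity)

lemma antitoneOn_potential {ε α : ℝ} (hε : 0 ≤ ε) (hα : 0 < α) (y : ℝ) :
    AntitoneOn (fun x => potential ε α x y) (Ioi 0) := by
  have hd (x : ℝ) (hx : 0 < x) := hasDerivAt_potential_comp (ε := ε) hα (hasDerivAt_id' x) hx
    (hasDerivAt_const x y)
  refine antitoneOn_of_hasDerivWithinAt_nonpos (convex_Ioi 0)
    (fun x hx => (hd x hx).continuousAt.continuousWithinAt)
    (fun x hx => (hd x (interior_subset hx)).hasDerivWithinAt) fun x _ => ?_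
  simpa using potentialDerivX_nonpos hε hα.le x y

noncomputable def shiftedPotential (ε α k z V S : ℝ) : ℝ := potential ε α (V + z + k * S) S

lemma Dfun_eq_potentialDeriv {ε α k z V S : ℝ} (hα : 0 < α) (hx : 0 < V + z + k * S) :
    Dfun ε α k z V S =
      potentialDerivY ε α (V + z + k * S) S + k * potentialDerivX ε α (V + z + k * S) S := by
  unfold Dfun potentialDerivY potentialDerivX potentialArg
  generalize V + z + k * S = x at hx ⊢
  have h4 : √(4 * α * x) = 2 * √(α * x) := by
    rw [mul_assoc, sqrt_mul (by norm_num), show (4 : ℝ) = 2 ^ 2 by norm_num, sqrt_sq (by norm_num)]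
  rw [h4, sqrt_mul hα.le, div_pow, mul_pow, mul_pow, sq_sqrt hα.le, sq_sqrt hx.le]
  field_simp
  rw [show (2 : ℝ) ^ 2 = 4 by norm_num]
  linear_combination (-(ε * k * exp (S ^ 2 / (4 * α * x)))) * sq_sqrt hα.le

lemma shiftedPotential_round_le {ε α h z V S c : ℝ} (hε : 0 ≤ ε) (hα : 1 / 2 < α) (hh : 0 < h)
    (hz : (2 * α - 1) * z = (12 * α + 4) * h ^ 2) (hV : 0 ≤ V) (hS : -h ≤ S) (hc : |c| ≤ h) :
    shiftedPotential ε α (2 * h) z (V + c ^ 2) (S - c) ≤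
      shiftedPotential ε α (2 * h) z V S - c * Dfun ε α (2 * h) z V S := by
  have hx : 0 < V + z + 2 * h * S := by
    simpa using round_variance_pos hα hh hz (A := V + z) (by linarith) hS 0
  rw [Dfun_eq_potentialDeriv (by linarith) hx, shiftedPotential, shiftedPotential,
    show V + c ^ 2 + z + 2 * h * (S - c) = V + z + 2 * h * (S - c) + c ^ 2 by ring]
  exact potential_round_le hε hα hh hz (by linarith) hS hc

lemma shiftedPotential_le_of_le {ε α h₁ h₂ z₁ z₂ V S : ℝ} (hε : 0 ≤ ε) (hα : 1 / 2 < α)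
    (hh₁ : 0 < h₁) (hh : h₁ ≤ h₂) (hz₁ : (2 * α - 1) * z₁ = (12 * α + 4) * h₁ ^ 2)
    (hz₂ : (2 * α - 1) * z₂ = (12 * α + 4) * h₂ ^ 2) (hV : 0 ≤ V) (hS : -h₁ ≤ S) :
    shiftedPotential ε α (2 * h₂) z₂ V S ≤ shiftedPotential ε α (2 * h₁) z₁ V S := by
  have hx₁ : 0 < V + z₁ + 2 * h₁ * S := by
    simpa using round_variance_pos hα hh₁ hz₁ (A := V + z₁) (by linarith) hS 0
  have hz : z₁ + 2 * h₁ * S ≤ z₂ + 2 * h₂ * S := by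
    nlinarith [mul_le_mul_of_nonneg_left hS
        (mul_nonneg (by linarith : 0 ≤ 2 * (2 * α - 1)) (sub_nonneg.2 hh)),
      mul_nonneg (sub_nonneg.2 hh)
        (by nlinarith : 0 ≤ (12 * α + 4) * (h₂ + h₁) - (4 * α - 2) * h₁)]
  exact antitoneOn_potential hε (by linarith) S hx₁ (by simp only [mem_Ioi]; linarith) (by linarith)

lemma shiftedPotential_zero_nonpos {ε : ℝ} (hε : 0 ≤ ε) (α k z : ℝ) :
    shiftedPotential ε α k z 0 0 ≤ 0 := by
  have hF : erfiIntegral 0 = 0 := intervalIntegral.integral_same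
  simp only [shiftedPotential, potential, potentialArg, zero_div, hF]
  nlinarith [mul_nonneg hε (sqrt_nonneg (α * (0 + z + k * 0)))]

lemma neg_le_potential {ε : ℝ} (hε : 0 ≤ ε) (α x y : ℝ) : -(ε * √(α * x)) ≤ potential ε α x y := by
  unfold potential
  nlinarith [erfiIntegral_nonneg (potentialArg α x y), mul_nonneg hε (sqrt_nonneg (α * x))]

lemma exp_sq_div_four_mul_le {θ : ℝ} (hθ : 1 ≤ θ) : exp (θ ^ 2) / (4 * θ) ≤ erfi θ / 2 + 1 / 4 := by
  rw [div_le_iff₀ (by positivity)]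
  nlinarith [exp_sq_le_two_mul_erfi_add_one θ]

lemma two_mul_mul_sqrt_le {α k x₀ a t : ℝ} (hα : 0 ≤ α) (hk : 0 ≤ k) (hx₀ : 0 ≤ x₀) (ha : 0 ≤ a)
    (ht : 4 * α * k * a ^ 2 + √(4 * α * x₀) * a ≤ t) :
    2 * a * √(α * (x₀ + k * t)) ≤ t := by
  have hq := sq_sqrt (by positivity : 0 ≤ 4 * α * x₀)
  have hq0 := sqrt_nonneg (4 * α * x₀)
  have ht0 : 0 ≤ t := le_trans (by positivity) ht
  have hqa : √(4 * α * x₀) * a ≤ t := le_trans (le_add_of_nonneg_left (by positivity)) ht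
  refine (pow_le_pow_iff_left₀ (by positivity) ht0 two_ne_zero).1 ?_
  rw [mul_pow, sq_sqrt (by positivity)]
  nlinarith [mul_le_mul_of_nonneg_left ht ht0, mul_le_mul_of_nonneg_left hqa (mul_nonneg hq0 ha)]

lemma le_potentialDeriv {ε α k x₀ u a t : ℝ} (hε : 0 < ε) (hα : 0 < α) (hk : 0 ≤ k) (hx₀ : 0 < x₀)
    (ha : 1 ≤ a) (herfi : 2 * u / ε + 1 ≤ erfi a) (ht : 2 * a * √(α * (x₀ + k * t)) ≤ t) :
    u ≤ k * potentialDerivX ε α (x₀ + k * t) t + potentialDerivY ε α (x₀ + k * t) t := by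
  unfold potentialDerivX potentialDerivY potentialArg
  set r := √(α * (x₀ + k * t))
  have ht0 : 0 ≤ t := le_trans (by positivity) ht
  have hr : 0 < r := sqrt_pos.2 (by positivity)
  have hr2 : r ^ 2 = α * (x₀ + k * t) := sq_sqrt (by positivity)
  have hθ : a ≤ t / (2 * r) := by rw [le_div_iff₀ (by positivity)]; linarith
  set θ := t / (2 * r)
  have ht' : 0 < t := lt_of_lt_of_le (by positivity) ht
  -- `α k t ≤ r²` bounds the `x`-derivative term by `ε exp θ² / (4θ)`, which `erfi θ` dominates.
  have hkt : α * k * t ≤ r ^ 2 := by rw [hr2]; nlinarith [mul_pos hα hx₀]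
  have hderivX : k * (ε * α * exp (θ ^ 2) / (2 * r)) ≤ ε * (exp (θ ^ 2) / (4 * θ)) := by
    rw [show ε * (exp (θ ^ 2) / (4 * θ)) = ε * exp (θ ^ 2) * r / (2 * t) by
      simp only [θ]; field_simp; ring, mul_div_assoc',
      div_le_div_iff₀ (by positivity) (by positivity)]
    nlinarith [mul_le_mul_of_nonneg_left hkt (by positivity : 0 ≤ ε * exp (θ ^ 2))]
  have hexp := mul_le_mul_of_nonneg_left (exp_sq_div_four_mul_le (ha.trans hθ)) hε.le
  have herfiθ := mul_le_mul_of_nonneg_left (monotone_erfi hθ) hε.le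
  have hu : 2 * u + ε ≤ ε * erfi a := by
    rwa [div_add_one hε.ne', div_le_iff₀' hε] at herfi
  linarith

lemma mul_sub_potential_le {ε α k x₀ u a S : ℝ} (hε : 0 < ε) (hα : 0 < α) (hk : 0 ≤ k)
    (hx₀ : 0 < x₀) (hu : 0 ≤ u) (ha : 1 ≤ a) (herfi : 2 * u / ε + 1 ≤ erfi a) :
    u * S - potential ε α (x₀ + k * S) S ≤
      ε * √(α * (x₀ + k * (4 * α * k * a ^ 2 + √(4 * α * x₀) * a))) +
        u * (4 * α * k * a ^ 2 + √(4 * α * x₀) * a) := by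
  -- `S₀` is the paper's `S̄`.
  set S₀ := 4 * α * k * a ^ 2 + √(4 * α * x₀) * a
  have hS₀ : 0 ≤ S₀ := by positivity
  have hbound := neg_le_potential hε.le α (x₀ + k * S₀) S₀
  rcases le_or_gt S S₀ with hS | hS
  · have hsqrt : √(α * (x₀ + k * S)) ≤ √(α * (x₀ + k * S₀)) :=
      sqrt_le_sqrt (by gcongr)
    nlinarith [neg_le_potential hε.le α (x₀ + k * S) S, mul_le_mul_of_nonneg_left hS hu]
  · have hd (t : ℝ) (ht : S₀ ≤ t) := ((hasDerivAt_id' t).const_mul u).sub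
      (hasDerivAt_potential_comp (ε := ε) hα (((hasDerivAt_id' t).const_mul k).const_add x₀)
        (add_pos_of_pos_of_nonneg hx₀ (mul_nonneg hk (hS₀.trans ht))) (hasDerivAt_id' t))
    have hanti : AntitoneOn (fun t => u * t - potential ε α (x₀ + k * t) t) (Ici S₀) := by
      refine antitoneOn_of_hasDerivWithinAt_nonpos (convex_Ici S₀)
        (fun t ht => (hd t ht).continuousAt.continuousWithinAt)
        (fun t ht => (hd t (interior_subset ht)).hasDerivWithinAt) fun t ht => ?_
      have := le_potentialDeriv hε hα hk hx₀ ha herfi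
        (two_mul_mul_sqrt_le hα.le hk hx₀.le (by linarith) (interior_subset ht))
      linarith
    have := hanti (mem_Ici.2 le_rfl) (mem_Ici.2 hS.le) hS.le
    simp only at this
    linarith

lemma le_erfi_one_add_sqrt_log {ε u : ℝ} (hε : 0 < ε) (hu : 0 ≤ u) :
    2 * u / ε + 1 ≤ erfi (1 + √(log (2 * u / ε + 1))) := by
  have hlog : 0 ≤ log (2 * u / ε + 1) := log_nonneg (le_add_of_nonneg_left (by positivity))
  have := exp_sq_le_erfi_add_one (sqrt_nonneg (log (2 * u / ε + 1)))
  rwa [sq_sqrt hlog, exp_log (by positivity), add_comm (√(log (2 * u / ε + 1))) 1] at this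

lemma sum_mul_add_shiftedPotential_nonpos {ε α : ℝ} (hε : 0 < ε) (hα : 1 / 2 < α)
    {h z l V S y : ℕ → ℝ} (hpos : ∀ t, 1 ≤ t → 0 < h t) (hmono : ∀ t, 1 ≤ t → h t ≤ h (t + 1))
    (hz : ∀ t, (2 * α - 1) * z t = (12 * α + 4) * h t ^ 2) (hl : ∀ t, 1 ≤ t → |l t| ≤ h t)
    (hSh : ∀ t, 1 ≤ t → -h t ≤ S t)
    (hV : ∀ t, V t = ∑ i ∈ Finset.Icc 1 t, l i ^ 2) (hS : ∀ t, S t = -∑ i ∈ Finset.Icc 1 t, l i)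
    (hy : ∀ t, 1 ≤ t → y t = Dfun ε α (2 * h t) (z t) (V (t - 1)) (S (t - 1)))
    {T : ℕ} (hT : 1 ≤ T) :
    ∑ t ∈ Finset.Icc 1 T, l t * y t + shiftedPotential ε α (2 * h T) (z T) (V T) (S T) ≤ 0 := by
  have hV0 (t : ℕ) : 0 ≤ V t := hV t ▸ Finset.sum_nonneg fun i _ => sq_nonneg (l i)
  have hround (t : ℕ) :
      shiftedPotential ε α (2 * h (t + 1)) (z (t + 1)) (V (t + 1)) (S (t + 1)) ≤
        shiftedPotential ε α (2 * h (t + 1)) (z (t + 1)) (V t) (S t) - l (t + 1) * y (t + 1) := by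
    have hSt : -h (t + 1) ≤ S t := by
      rcases Nat.eq_zero_or_pos t with rfl | ht
      · simp [hS, (hpos 1 le_rfl).le]
      · linarith [hSh t ht, hmono t ht]
    rw [hV, hS, Finset.sum_Icc_succ_top (by omega), Finset.sum_Icc_succ_top (by omega), ← hV,
      neg_add, ← hS, ← sub_eq_add_neg, hy (t + 1) (by omega), Nat.add_sub_cancel]
    exact shiftedPotential_round_le hε.le hα (hpos _ (by omega)) (hz _) (hV0 t) hSt
      (hl _ (by omega))
  induction T, hT using Nat.le_induction with
  | base =>
    have h0 : V 0 = 0 ∧ S 0 = 0 := by simp [hV, hS]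
    have h1 := hround 0
    rw [h0.1, h0.2] at h1
    rw [Finset.Icc_self, Finset.sum_singleton]
    linarith [shiftedPotential_zero_nonpos hε.le α (2 * h 1) (z 1)]
  | succ T hT ih =>
    rw [Finset.sum_Icc_succ_top (by omega)]
    linarith [hround T, shiftedPotential_le_of_le hε.le hα (hpos T hT) (hmono T hT) (hz T)
      (hz (T + 1)) (hV0 T) (hSh T hT)]

/-- Regret bound of the 1D base algorithm. -/
theorem base_algorithm_regret (ε α : ℝ) (hε : 0 < ε) (hα : 1 / 2 < α)
    (h : ℕ → ℝ)
    (hpos : ∀ t, 1 ≤ t → 0 < h t)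
    (hmono : ∀ t, 1 ≤ t → h t ≤ h (t + 1))
    (k z : ℕ → ℝ)
    (hk : ∀ t, k t = 2 * h t)
    (hz : ∀ t, z t = (12 * α + 4) / (2 * α - 1) * h t ^ 2)
    (ltil : ℕ → ℝ)
    (hl : ∀ t, 1 ≤ t → |ltil t| ≤ h t)
    (hlsum : ∀ t, 1 ≤ t → (∑ i ∈ Finset.Icc 1 t, ltil i) ≤ h t)
    (Vtil Stil ytil : ℕ → ℝ)
    (hV : ∀ t, Vtil t = ∑ i ∈ Finset.Icc 1 t, ltil i ^ 2)
    (hS : ∀ t, Stil t = -∑ i ∈ Finset.Icc 1 t, ltil i)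
    (hy : ∀ t, 1 ≤ t → ytil t = Dfun ε α (k t) (z t) (Vtil (t - 1)) (Stil (t - 1))) :
    ∀ T : ℕ, 1 ≤ T → ∀ util : ℝ, 0 ≤ util →
      (∑ t ∈ Finset.Icc 1 T, ltil t * (ytil t - util)) ≤
        ε * Real.sqrt (α * (Vtil T + z T + k T *
            (4 * α * k T * (1 + Real.sqrt (Real.log (2 * util / ε + 1))) ^ 2 +
              Real.sqrt (4 * α * (Vtil T + z T)) *
                (1 + Real.sqrt (Real.log (2 * util / ε + 1))))))
          + util *
            (4 * α * k T * (1 + Real.sqrt (Real.log (2 * util / ε + 1))) ^ 2 +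
              Real.sqrt (4 * α * (Vtil T + z T)) *
                (1 + Real.sqrt (Real.log (2 * util / ε + 1)))) := by
  intro T hT u hu
  simp only [hk] at hy ⊢
  have hz' (t : ℕ) : (2 * α - 1) * z t = (12 * α + 4) * h t ^ 2 := by
    rw [hz t]; field_simp [(by linarith : 2 * α - 1 ≠ 0)]
  have hpot := sum_mul_add_shiftedPotential_nonpos hε hα hpos hmono hz' hl
    (fun t ht => by rw [hS]; linarith [hlsum t ht]) hV hS hy hT
  have hx₀ : 0 < Vtil T + z T := by
    nlinarith [hV T ▸ Finset.sum_nonneg fun i _ => sq_nonneg (ltil i), hz' T, pow_pos (hpos T hT) 2]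
  have hconj := mul_sub_potential_le (α := α) (k := 2 * h T) (S := Stil T) hε (by linarith)
    (by linarith [hpos T hT]) hx₀ hu (le_add_of_nonneg_right (sqrt_nonneg _))
    (le_erfi_one_add_sqrt_log hε hu)
  have hsum : ∑ t ∈ Finset.Icc 1 T, ltil t * (ytil t - u) =
      ∑ t ∈ Finset.Icc 1 T, ltil t * ytil t + u * Stil T := by
    rw [hS, mul_neg, Finset.mul_sum, ← sub_eq_add_neg, ← Finset.sum_sub_distrib]
    exact Finset.sum_congr rfl fun t _ => by ring
  rw [hsum]
  unfold shiftedPotential at hpot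
  linarith
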